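/- Let L₁ > 0, L₂ + L₃ ≥ 0 and L₄ ∈ ℝ. Then there exists a constant C ≥ 0, depending only on L₁, L₂, L₃, L₄, such that for every smooth compactly supported map Q : ℝ³ → S₀ one has ∫_{ℝ³} tr((M_Q + E_Q)²) dx ≥ (L₁²/2) ∫_{ℝ³} |ΔQ|² dx + 2L₁(L₂+L₃) ∫_{ℝ³} |∇ div Q|² dx − C ∫_{ℝ³} |∇Q|² dx. -/

import Mathlib

open Matrix Finset MeasureTheory

noncomputable section

/-- Partial derivative in the `k`-th coordinate direction. -/
def pd (k : Fin 3) (f : (Fin 3 → ℝ) → ℝ) (x : Fin 3 → ℝ) : ℝ :=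
  fderiv ℝ f x (Pi.single k 1)

/-- The Levi-Civita symbol on `Fin 3`. -/
def eps (i j k : Fin 3) : ℝ :=
  ((((j : ℕ) : ℝ) - ((i : ℕ) : ℝ)) * (((k : ℕ) : ℝ) - ((j : ℕ) : ℝ))
    * (((k : ℕ) : ℝ) - ((i : ℕ) : ℝ))) / 2

/-- The `M_Q` elastic part of the molecular field. -/
def MQ (L₁ L₂ L₃ : ℝ) (Q : (Fin 3 → ℝ) → Matrix (Fin 3) (Fin 3) ℝ) (i j : Fin 3)
    (x : Fin 3 → ℝ) : ℝ :=
  L₁ * (∑ k : Fin 3, pd k (pd k (fun y => Q y i j)) x)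
    + (L₂ + L₃) / 2 *
      ((∑ k : Fin 3, pd k (pd j (fun y => Q y i k)) x)
        + (∑ k : Fin 3, pd k (pd i (fun y => Q y j k)) x)
        - 2 / 3 * (if i = j then (1 : ℝ) else 0)
            * ∑ k : Fin 3, ∑ p : Fin 3, pd k (pd p (fun y => Q y k p)) x)

/-- The `E_Q` (chiral) elastic part of the molecular field. -/
def EQ (L₄ : ℝ) (Q : (Fin 3 → ℝ) → Matrix (Fin 3) (Fin 3) ℝ) (i j : Fin 3)
    (x : Fin 3 → ℝ) : ℝ :=
  L₄ / 2 * ((∑ l : Fin 3, ∑ k : Fin 3, eps l i k * pd k (fun y => Q y l j) x)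
    + (∑ l : Fin 3, ∑ k : Fin 3, eps l j k * pd k (fun y => Q y l i) x)
    - 2 / 3 * (if i = j then (1 : ℝ) else 0)
        * ∑ l : Fin 3, ∑ p : Fin 3, ∑ k : Fin 3, eps l p k * pd k (fun y => Q y l p) x)

/-- The bulk part of the molecular field. -/
def bulkB (a b c : ℝ) (Q : Matrix (Fin 3) (Fin 3) ℝ) : Matrix (Fin 3) (Fin 3) ℝ :=
  (-a) • Q + b • (Q ^ 2 - ((Q ^ 2).trace / 3) • (1 : Matrix (Fin 3) (Fin 3) ℝ))
    - (c * (Q ^ 2).trace) • Q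

/-- The full molecular field `H_Q = M_Q + E_Q + B_Q`. -/
def HQ (L₁ L₂ L₃ L₄ a b c : ℝ) (Q : (Fin 3 → ℝ) → Matrix (Fin 3) (Fin 3) ℝ)
    (i j : Fin 3) (x : Fin 3 → ℝ) : ℝ :=
  MQ L₁ L₂ L₃ Q i j x + EQ L₄ Q i j x + bulkB a b c (Q x) i j

/-! ### Auxiliary infrastructure -/

/-- Smooth compactly supported real functions on ℝ³. -/
def Sm (f : (Fin 3 → ℝ) → ℝ) : Prop := ContDiff ℝ (⊤ : ℕ∞) f ∧ HasCompactSupport f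

namespace Sm

lemma contDiff {f} (hf : Sm f) : ContDiff ℝ (⊤ : ℕ∞) f := hf.1

lemma supp {f} (hf : Sm f) : HasCompactSupport f := hf.2

lemma pd' {f} (hf : Sm f) (k : Fin 3) : Sm (pd k f) := by
  constructor
  · have h1 : ContDiff ℝ (⊤ : ℕ∞) (fderiv ℝ f) := (hf.1.fderiv_right (by simp))
    exact (ContinuousLinearMap.apply ℝ ℝ (Pi.single k 1)).contDiff.comp h1
  · have h2 : HasCompactSupport (fderiv ℝ f) := hf.2.fderiv (𝕜 := ℝ)
    exact h2.comp_left (g := fun L : (Fin 3 → ℝ) →L[ℝ] ℝ => L (Pi.single k 1)) rfl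

lemma diff {f} (hf : Sm f) : Differentiable ℝ f := hf.1.differentiable (by simp)

lemma cont {f} (hf : Sm f) : Continuous f := hf.1.continuous

lemma integrable {f} (hf : Sm f) : Integrable f :=
  hf.cont.integrable_of_hasCompactSupport hf.supp

lemma mul {f g} (hf : Sm f) (hg : Sm g) : Sm (fun x => f x * g x) :=
  ⟨hf.1.mul hg.1, hf.2.mul_right⟩

lemma integrable_mul {f g} (hf : Sm f) (hg : Sm g) : Integrable (fun x => f x * g x) :=
  (hf.mul hg).integrable

lemma add {f g} (hf : Sm f) (hg : Sm g) : Sm (fun x => f x + g x) :=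
  ⟨hf.1.add hg.1, hf.2.add hg.2⟩

lemma neg {f} (hf : Sm f) : Sm (fun x => - f x) :=
  ⟨hf.1.neg, hf.2.neg⟩

lemma sub {f g} (hf : Sm f) (hg : Sm g) : Sm (fun x => f x - g x) := by
  simpa [sub_eq_add_neg] using hf.add hg.neg

lemma const_mul {f} (hf : Sm f) (c : ℝ) : Sm (fun x => c * f x) :=
  ⟨contDiff_const.mul hf.1, by exact hf.2.mul_left (f := fun _ => c)⟩

lemma sum {ι : Type*} (s : Finset ι) {f : ι → (Fin 3 → ℝ) → ℝ} (hf : ∀ i ∈ s, Sm (f i)) :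
    Sm (fun x => ∑ i ∈ s, f i x) := by
  classical
  induction s using Finset.induction_on with
  | empty => exact ⟨by simpa using contDiff_const, by exact HasCompactSupport.zero⟩
  | insert a s hnot ih =>
      simp only [Finset.sum_insert hnot]
      exact (hf a (Finset.mem_insert_self a s)).add
        (ih fun i hi => hf i (Finset.mem_insert_of_mem hi))

lemma sq {f} (hf : Sm f) : Sm (fun x => f x ^ 2) := by
  simpa [pow_two] using hf.mul hf

lemma integrable_sq {f} (hf : Sm f) : Integrable (fun x => f x ^ 2) :=
  hf.sq.integrable

end Sm

lemma pd_const (c : ℝ) (k : Fin 3) (x : Fin 3 → ℝ) : pd k (fun _ => c) x = 0 := by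
  unfold pd
  rw [fderiv_fun_const]
  simp

lemma pd_sum {ι : Type*} (s : Finset ι) {f : ι → (Fin 3 → ℝ) → ℝ}
    (hf : ∀ i ∈ s, Differentiable ℝ (f i)) (k : Fin 3) (x : Fin 3 → ℝ) :
    pd k (fun y => ∑ i ∈ s, f i y) x = ∑ i ∈ s, pd k (f i) x := by
  unfold pd
  rw [fderiv_fun_sum (fun i hi => (hf i hi).differentiableAt)]
  simp

lemma pd_comm {f} (hf : ContDiff ℝ (⊤ : ℕ∞) f) (a b : Fin 3) (x : Fin 3 → ℝ) :
    pd a (pd b f) x = pd b (pd a f) x := by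
  have hdf : ContDiff ℝ (⊤ : ℕ∞) (fderiv ℝ f) := hf.fderiv_right (by simp)
  have key : ∀ v w : Fin 3 → ℝ,
      fderiv ℝ (fun y => fderiv ℝ f y w) x v = fderiv ℝ (fderiv ℝ f) x v w := by
    intro v w
    have : fderiv ℝ (fun y => fderiv ℝ f y w) x
        = ((fderiv ℝ (fderiv ℝ f) x).flip w) := by
      have h := fderiv_clm_apply (c := fderiv ℝ f) (u := fun _ => w)
        (hdf.differentiable (by simp) x) (differentiableAt_const w)
      simpa using h
    rw [this]; rfl
  have hsymm : fderiv ℝ (fderiv ℝ f) x (Pi.single a 1) (Pi.single b 1)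
      = fderiv ℝ (fderiv ℝ f) x (Pi.single b 1) (Pi.single a 1) := by
    apply second_derivative_symmetric (f := f) (f' := fderiv ℝ f)
      (fun y => ((hf.differentiable (by simp)) y).hasFDerivAt)
      ((hdf.differentiable (by simp) x).hasFDerivAt)
  show pd a (fun y => fderiv ℝ f y (Pi.single b 1)) x
      = pd b (fun y => fderiv ℝ f y (Pi.single a 1)) x
  unfold pd
  rw [key, key, hsymm]

/-- Integration by parts. -/
lemma ibp {f g} (hf : Sm f) (hg : Sm g) (k : Fin 3) :
    ∫ x, pd k f x * g x = - ∫ x, f x * pd k g x := by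
  have h2 : ∫ x, f x * pd k g x = - ∫ x, pd k f x * g x :=
    integral_mul_fderiv_eq_neg_fderiv_mul_of_integrable
      ((hf.pd' k).integrable_mul hg) (hf.integrable_mul (hg.pd' k))
      (hf.integrable_mul hg) (fun x _ => hf.diff x) (fun x _ => hg.diff x)
  linarith [h2]

lemma ibp' {f g} (hf : Sm f) (hg : Sm g) (k : Fin 3) :
    ∫ x, f x * pd k g x = - ∫ x, pd k f x * g x :=
  integral_mul_fderiv_eq_neg_fderiv_mul_of_integrable
    ((hf.pd' k).integrable_mul hg) (hf.integrable_mul (hg.pd' k))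
    (hf.integrable_mul hg) (fun x _ => hf.diff x) (fun x _ => hg.diff x)

/-- Key second-order integration by parts identity. -/
lemma cross_id {u v} (hu : Sm u) (hv : Sm v) (m k β : Fin 3) :
    ∫ x, pd m (pd m u) x * pd k (pd β v) x
      = ∫ x, pd m (pd β u) x * pd m (pd k v) x := by
  have e1 : ∫ x, pd m (pd m u) x * pd k (pd β v) x
      = - ∫ x, pd m u x * pd m (pd k (pd β v)) x :=
    ibp (hu.pd' m) ((hv.pd' β).pd' k) m
  have e2 : pd m (pd k (pd β v)) = pd β (pd m (pd k v)) := by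
    have c1 : pd k (pd β v) = pd β (pd k v) := funext (pd_comm hv.contDiff k β)
    rw [c1]
    exact funext (pd_comm (hv.pd' k).contDiff m β)
  have e3 : ∫ x, pd m u x * pd β (pd m (pd k v)) x
      = - ∫ x, pd β (pd m u) x * pd m (pd k v) x :=
    ibp' (hu.pd' m) ((hv.pd' k).pd' m) β
  have e4 : pd β (pd m u) = pd m (pd β u) := funext (pd_comm hu.contDiff β m)
  rw [e1, e2, e3, ← e4]; ring_nf

/-- Splitting a double-sum integral. -/
lemma int2 {F : Fin 3 → Fin 3 → (Fin 3 → ℝ) → ℝ}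
    (h : ∀ i j, Integrable (fun x => F i j x)) :
    ∫ x : Fin 3 → ℝ, ∑ i : Fin 3, ∑ j : Fin 3, F i j x
      = ∑ i : Fin 3, ∑ j : Fin 3, ∫ x : Fin 3 → ℝ, F i j x := by
  rw [integral_finset_sum _ (fun i _ => integrable_finset_sum _ fun j _ => h i j)]
  exact Finset.sum_congr rfl fun i _ => integral_finset_sum _ fun j _ => h i j

lemma eps_sq_le_one (i j k : Fin 3) : eps i j k ^ 2 ≤ 1 := by
  fin_cases i <;> fin_cases j <;> fin_cases k <;> norm_num [eps]

/-! ### Convenient abbreviations -/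

def qd (Q : (Fin 3 → ℝ) → Matrix (Fin 3) (Fin 3) ℝ) (α β : Fin 3) : (Fin 3 → ℝ) → ℝ :=
  fun x => ∑ k : Fin 3, pd k (pd k (fun y => Q y α β)) x

def qT (Q : (Fin 3 → ℝ) → Matrix (Fin 3) (Fin 3) ℝ) (α β : Fin 3) : (Fin 3 → ℝ) → ℝ :=
  fun x => ∑ k : Fin 3, pd k (pd β (fun y => Q y α k)) x

def qtr (Q : (Fin 3 → ℝ) → Matrix (Fin 3) (Fin 3) ℝ) : (Fin 3 → ℝ) → ℝ :=
  fun x => ∑ k : Fin 3, ∑ p : Fin 3, pd k (pd p (fun y => Q y k p)) x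

def qg (Q : (Fin 3 → ℝ) → Matrix (Fin 3) (Fin 3) ℝ) : (Fin 3 → ℝ) → ℝ :=
  fun x => ∑ α : Fin 3, ∑ β : Fin 3, ∑ k : Fin 3, (pd k (fun y => Q y α β) x) ^ 2

def qW (L₂ L₃ L₄ : ℝ) (Q : (Fin 3 → ℝ) → Matrix (Fin 3) (Fin 3) ℝ) (α β : Fin 3) :
    (Fin 3 → ℝ) → ℝ :=
  fun x => (L₂ + L₃) / 2 * (qT Q α β x + qT Q β α x
      - 2 / 3 * (if α = β then (1 : ℝ) else 0) * qtr Q x) + EQ L₄ Q α β x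

set_option maxHeartbeats 2000000 in
theorem elastic_molecular_field_coercivity (L₁ L₂ L₃ L₄ : ℝ)
    (hL₁ : 0 < L₁) (hL₂₃ : 0 ≤ L₂ + L₃) :
    ∃ C : ℝ, 0 ≤ C ∧
      ∀ Q : (Fin 3 → ℝ) → Matrix (Fin 3) (Fin 3) ℝ,
        (∀ i j : Fin 3, ContDiff ℝ (⊤ : ℕ∞) (fun y => Q y i j)) →
        (∀ i j : Fin 3, HasCompactSupport (fun y => Q y i j)) →
        (∀ x : Fin 3 → ℝ, (Q x).IsSymm) → (∀ x : Fin 3 → ℝ, (Q x).trace = 0) →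
        L₁ ^ 2 / 2 * (∫ x : Fin 3 → ℝ,
              ∑ α : Fin 3, ∑ β : Fin 3,
                (∑ k : Fin 3, pd k (pd k (fun y => Q y α β)) x) ^ 2)
          + 2 * L₁ * (L₂ + L₃) * (∫ x : Fin 3 → ℝ,
              ∑ α : Fin 3, ∑ γ : Fin 3,
                (pd γ (fun y => ∑ β : Fin 3, pd β (fun z => Q z α β) y) x) ^ 2)
          - C * (∫ x : Fin 3 → ℝ,
              ∑ α : Fin 3, ∑ β : Fin 3, ∑ k : Fin 3, (pd k (fun y => Q y α β) x) ^ 2) ≤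
        ∫ x : Fin 3 → ℝ,
          ∑ α : Fin 3, ∑ β : Fin 3,
            (MQ L₁ L₂ L₃ Q α β x + EQ L₄ Q α β x)
              * (MQ L₁ L₂ L₃ Q β α x + EQ L₄ Q β α x) := by
  refine ⟨414 * L₄ ^ 2, by positivity, ?_⟩
  intro Q hQ1 hQ2 hsym htr
  have hq : ∀ α β, Sm (fun y => Q y α β) := fun α β => ⟨hQ1 α β, hQ2 α β⟩
  have hfs : ∀ α β : Fin 3, (fun y => Q y β α) = (fun y => Q y α β) := by
    intro α β; funext y
    have h := congrFun (congrFun (hsym y) α) β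
    simpa [Matrix.transpose_apply] using h
  have hqdSm : ∀ α β, Sm (qd Q α β) := fun α β =>
    Sm.sum _ fun k _ => ((hq α β).pd' k).pd' k
  have hqTSm : ∀ α β, Sm (qT Q α β) := fun α β =>
    Sm.sum _ fun k _ => ((hq α k).pd' β).pd' k
  have hqtrSm : Sm (qtr Q) :=
    Sm.sum _ fun k _ => Sm.sum _ fun p _ => ((hq k p).pd' p).pd' k
  have hqESm : ∀ α β, Sm (fun x => EQ L₄ Q α β x) := by
    intro α β
    have s1 : ∀ a b : Fin 3,
        Sm (fun x => ∑ l : Fin 3, ∑ k : Fin 3, eps l a k * pd k (fun y => Q y l b) x) :=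
      fun a b => Sm.sum _ fun l _ => Sm.sum _ fun k _ => ((hq l b).pd' k).const_mul _
    have s3 : Sm (fun x => ∑ l : Fin 3, ∑ p : Fin 3, ∑ k : Fin 3,
        eps l p k * pd k (fun y => Q y l p) x) :=
      Sm.sum _ fun l _ => Sm.sum _ fun p _ => Sm.sum _ fun k _ =>
        ((hq l p).pd' k).const_mul _
    exact (((s1 α β).add (s1 β α)).sub (s3.const_mul _)).const_mul _
  have hqWSm : ∀ α β, Sm (qW L₂ L₃ L₄ Q α β) := fun α β =>
    ((((hqTSm α β).add (hqTSm β α)).sub (hqtrSm.const_mul _)).const_mul _).add (hqESm α β)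
  have hqgSm : Sm (qg Q) :=
    Sm.sum _ fun α _ => Sm.sum _ fun β _ => Sm.sum _ fun k _ => ((hq α β).pd' k).sq
  have hqdsym : ∀ α β, qd Q β α = qd Q α β := by
    intro α β; unfold qd; rw [hfs α β]
  have hdiag0 : ∀ x, ∑ α : Fin 3, qd Q α α x = 0 := by
    intro x
    have hz : (fun z => ∑ α : Fin 3, Q z α α) = (fun _ => (0 : ℝ)) := by
      funext z; simpa [Matrix.trace, Matrix.diag] using htr z
    unfold qd
    rw [Finset.sum_comm]
    refine Finset.sum_eq_zero fun k _ => ?_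
    have h1 : (∑ α : Fin 3, pd k (pd k (fun y => Q y α α)) x)
        = pd k (fun y => ∑ α : Fin 3, pd k (fun z => Q z α α) y) x :=
      (pd_sum _ (fun α _ => ((hq α α).pd' k).diff) k x).symm
    have h2 : (fun y => ∑ α : Fin 3, pd k (fun z => Q z α α) y) = (fun _ => (0 : ℝ)) := by
      funext y
      rw [← pd_sum _ (fun α _ => (hq α α).diff) k y, hz, pd_const]
    rw [h1, h2, pd_const]
  have hMEsym : ∀ α β x, MQ L₁ L₂ L₃ Q β α x + EQ L₄ Q β α x
      = MQ L₁ L₂ L₃ Q α β x + EQ L₄ Q α β x := by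
    intro α β x
    have hδ : (if β = α then (1 : ℝ) else 0) = (if α = β then (1 : ℝ) else 0) := by
      simp [eq_comm]
    simp only [MQ, EQ, hfs α β, hδ]
    ring
  have hdecomp : ∀ α β x, MQ L₁ L₂ L₃ Q α β x + EQ L₄ Q α β x
      = L₁ * qd Q α β x + qW L₂ L₃ L₄ Q α β x := by
    intro α β x
    simp only [MQ, EQ, qW, qT, qtr, qd]
    ring
  -- abbreviations for the main quantities
  set SA := ∑ α : Fin 3, ∑ β : Fin 3, ∫ x : Fin 3 → ℝ, (qd Q α β x) ^ 2 with hSAdef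
  set SD := ∑ α : Fin 3, ∑ γ : Fin 3, ∫ x : Fin 3 → ℝ,
      (∑ β : Fin 3, pd γ (pd β (fun z => Q z α β)) x) ^ 2 with hSDdef
  set SE := ∑ α : Fin 3, ∑ β : Fin 3, ∫ x : Fin 3 → ℝ,
      qd Q α β x * EQ L₄ Q α β x with hSEdef
  set SW2 := ∑ α : Fin 3, ∑ β : Fin 3, ∫ x : Fin 3 → ℝ,
      (qW L₂ L₃ L₄ Q α β x) ^ 2 with hSW2def
  set SDW := ∑ α : Fin 3, ∑ β : Fin 3, ∫ x : Fin 3 → ℝ,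
      qd Q α β x * qW L₂ L₃ L₄ Q α β x with hSDWdef
  set E2 := ∑ α : Fin 3, ∑ β : Fin 3, ∫ x : Fin 3 → ℝ, (EQ L₄ Q α β x) ^ 2 with hE2def
  set IG := ∫ x : Fin 3 → ℝ, qg Q x with hIGdef
  -- conversion of the four integrals in the statement
  have hIAeq : (∫ x : Fin 3 → ℝ, ∑ α : Fin 3, ∑ β : Fin 3,
      (∑ k : Fin 3, pd k (pd k (fun y => Q y α β)) x) ^ 2) = SA := by
    rw [hSAdef]
    exact int2 fun α β => (hqdSm α β).integrable_sq
  have hIGeq : (∫ x : Fin 3 → ℝ, ∑ α : Fin 3, ∑ β : Fin 3, ∑ k : Fin 3,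
      (pd k (fun y => Q y α β) x) ^ 2) = IG := rfl
  have hIDeq : (∫ x : Fin 3 → ℝ, ∑ α : Fin 3, ∑ γ : Fin 3,
      (pd γ (fun y => ∑ β : Fin 3, pd β (fun z => Q z α β) y) x) ^ 2) = SD := by
    have hpt : (fun x : Fin 3 → ℝ => ∑ α : Fin 3, ∑ γ : Fin 3,
        (pd γ (fun y => ∑ β : Fin 3, pd β (fun z => Q z α β) y) x) ^ 2)
        = fun x => ∑ α : Fin 3, ∑ γ : Fin 3,
            (∑ β : Fin 3, pd γ (pd β (fun z => Q z α β)) x) ^ 2 := by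
      funext x
      refine Finset.sum_congr rfl fun α _ => Finset.sum_congr rfl fun γ _ => ?_
      rw [pd_sum _ (fun β _ => ((hq α β).pd' β).diff) γ x]
    rw [show (∫ x : Fin 3 → ℝ, ∑ α : Fin 3, ∑ γ : Fin 3,
        (pd γ (fun y => ∑ β : Fin 3, pd β (fun z => Q z α β) y) x) ^ 2)
        = ∫ x : Fin 3 → ℝ, ∑ α : Fin 3, ∑ γ : Fin 3,
            (∑ β : Fin 3, pd γ (pd β (fun z => Q z α β)) x) ^ 2 from by rw [hpt], hSDdef]
    exact int2 fun α γ => (Sm.sum _ fun β _ => ((hq α β).pd' β).pd' γ).integrable_sq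
  -- expansion of the right-hand side
  have hexp : ∀ α β, (∫ x : Fin 3 → ℝ, (L₁ * qd Q α β x + qW L₂ L₃ L₄ Q α β x) ^ 2)
      = L₁ ^ 2 * (∫ x : Fin 3 → ℝ, (qd Q α β x) ^ 2)
        + 2 * L₁ * (∫ x : Fin 3 → ℝ, qd Q α β x * qW L₂ L₃ L₄ Q α β x)
        + ∫ x : Fin 3 → ℝ, (qW L₂ L₃ L₄ Q α β x) ^ 2 := by
    intro α β
    have h1 : (fun x => (L₁ * qd Q α β x + qW L₂ L₃ L₄ Q α β x) ^ 2)
        = fun x => (L₁ ^ 2 * (qd Q α β x) ^ 2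
            + 2 * L₁ * (qd Q α β x * qW L₂ L₃ L₄ Q α β x)) + (qW L₂ L₃ L₄ Q α β x) ^ 2 :=
      funext fun x => by ring
    rw [h1, integral_add ((((hqdSm α β).sq.const_mul _).add
        (((hqdSm α β).mul (hqWSm α β)).const_mul _)).integrable) (hqWSm α β).integrable_sq,
      integral_add (((hqdSm α β).sq.const_mul _).integrable)
        ((((hqdSm α β).mul (hqWSm α β)).const_mul _).integrable),
      integral_const_mul, integral_const_mul]
  have hRHS : (∫ x : Fin 3 → ℝ, ∑ α : Fin 3, ∑ β : Fin 3,
      (MQ L₁ L₂ L₃ Q α β x + EQ L₄ Q α β x) * (MQ L₁ L₂ L₃ Q β α x + EQ L₄ Q β α x))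
      = L₁ ^ 2 * SA + 2 * L₁ * SDW + SW2 := by
    have hpt2 : (fun x : Fin 3 → ℝ => ∑ α : Fin 3, ∑ β : Fin 3,
        (MQ L₁ L₂ L₃ Q α β x + EQ L₄ Q α β x) * (MQ L₁ L₂ L₃ Q β α x + EQ L₄ Q β α x))
        = fun x => ∑ α : Fin 3, ∑ β : Fin 3,
            (L₁ * qd Q α β x + qW L₂ L₃ L₄ Q α β x) ^ 2 := by
      funext x
      refine Finset.sum_congr rfl fun α _ => Finset.sum_congr rfl fun β _ => ?_
      rw [hMEsym α β x, hdecomp α β x, ← pow_two]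
    rw [show (∫ x : Fin 3 → ℝ, ∑ α : Fin 3, ∑ β : Fin 3,
        (MQ L₁ L₂ L₃ Q α β x + EQ L₄ Q α β x) * (MQ L₁ L₂ L₃ Q β α x + EQ L₄ Q β α x))
        = ∫ x : Fin 3 → ℝ, ∑ α : Fin 3, ∑ β : Fin 3,
            (L₁ * qd Q α β x + qW L₂ L₃ L₄ Q α β x) ^ 2 from by rw [hpt2]]
    rw [int2 fun α β => (((hqdSm α β).const_mul L₁).add (hqWSm α β)).integrable_sq]
    calc (∑ α : Fin 3, ∑ β : Fin 3, ∫ x : Fin 3 → ℝ,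
        (L₁ * qd Q α β x + qW L₂ L₃ L₄ Q α β x) ^ 2)
        = ∑ α : Fin 3, ∑ β : Fin 3,
            (L₁ ^ 2 * (∫ x : Fin 3 → ℝ, (qd Q α β x) ^ 2)
              + 2 * L₁ * (∫ x : Fin 3 → ℝ, qd Q α β x * qW L₂ L₃ L₄ Q α β x)
              + ∫ x : Fin 3 → ℝ, (qW L₂ L₃ L₄ Q α β x) ^ 2) :=
          Finset.sum_congr rfl fun α _ => Finset.sum_congr rfl fun β _ => hexp α β
      _ = L₁ ^ 2 * SA + 2 * L₁ * SDW + SW2 := by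
          rw [hSAdef, hSDWdef, hSW2def]
          simp only [Finset.sum_add_distrib, ← Finset.mul_sum]
  -- splitting of the cross term
  have hWsplit : ∀ α β, (∫ x : Fin 3 → ℝ, qd Q α β x * qW L₂ L₃ L₄ Q α β x)
      = (L₂ + L₃) / 2 * (∫ x : Fin 3 → ℝ, qd Q α β x * qT Q α β x)
        + (L₂ + L₃) / 2 * (∫ x : Fin 3 → ℝ, qd Q α β x * qT Q β α x)
        - ((L₂ + L₃) / 2 * (2 / 3) * (if α = β then (1 : ℝ) else 0))
            * (∫ x : Fin 3 → ℝ, qd Q α β x * qtr Q x)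
        + ∫ x : Fin 3 → ℝ, qd Q α β x * EQ L₄ Q α β x := by
    intro α β
    have h1 : (fun x => qd Q α β x * qW L₂ L₃ L₄ Q α β x)
        = fun x => (((L₂ + L₃) / 2 * (qd Q α β x * qT Q α β x)
            + (L₂ + L₃) / 2 * (qd Q α β x * qT Q β α x))
            - ((L₂ + L₃) / 2 * (2 / 3) * (if α = β then (1 : ℝ) else 0))
                * (qd Q α β x * qtr Q x))
            + qd Q α β x * EQ L₄ Q α β x := by
      funext x; simp only [qW]; ring
    have ia : Integrable (fun x => (L₂ + L₃) / 2 * (qd Q α β x * qT Q α β x)) :=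
      ((hqdSm α β).integrable_mul (hqTSm α β)).const_mul _
    have ib : Integrable (fun x => (L₂ + L₃) / 2 * (qd Q α β x * qT Q β α x)) :=
      ((hqdSm α β).integrable_mul (hqTSm β α)).const_mul _
    have ic : Integrable (fun x => ((L₂ + L₃) / 2 * (2 / 3) * (if α = β then (1 : ℝ) else 0))
        * (qd Q α β x * qtr Q x)) :=
      ((hqdSm α β).integrable_mul hqtrSm).const_mul _
    have id' : Integrable (fun x => qd Q α β x * EQ L₄ Q α β x) :=
      (hqdSm α β).integrable_mul (hqESm α β)
    have iab2 : Integrable (fun x => (L₂ + L₃) / 2 * (qd Q α β x * qT Q α β x)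
        + (L₂ + L₃) / 2 * (qd Q α β x * qT Q β α x)) := ia.add ib
    have iab3 : Integrable (fun x => (L₂ + L₃) / 2 * (qd Q α β x * qT Q α β x)
        + (L₂ + L₃) / 2 * (qd Q α β x * qT Q β α x)
        - ((L₂ + L₃) / 2 * (2 / 3) * (if α = β then (1 : ℝ) else 0))
            * (qd Q α β x * qtr Q x)) := iab2.sub ic
    rw [h1, integral_add iab3 id', integral_sub iab2 ic,
      integral_add ia ib, integral_const_mul, integral_const_mul, integral_const_mul]
  have hSDWeq : SDW = (L₂ + L₃) / 2
        * (∑ α : Fin 3, ∑ β : Fin 3, ∫ x : Fin 3 → ℝ, qd Q α β x * qT Q α β x)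
      + (L₂ + L₃) / 2
        * (∑ α : Fin 3, ∑ β : Fin 3, ∫ x : Fin 3 → ℝ, qd Q α β x * qT Q β α x)
      - (∑ α : Fin 3, ∑ β : Fin 3, ((L₂ + L₃) / 2 * (2 / 3) * (if α = β then (1 : ℝ) else 0))
            * (∫ x : Fin 3 → ℝ, qd Q α β x * qtr Q x))
      + SE := by
    rw [hSDWdef, hSEdef]
    calc (∑ α : Fin 3, ∑ β : Fin 3, ∫ x : Fin 3 → ℝ, qd Q α β x * qW L₂ L₃ L₄ Q α β x)
        = ∑ α : Fin 3, ∑ β : Fin 3,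
            ((L₂ + L₃) / 2 * (∫ x : Fin 3 → ℝ, qd Q α β x * qT Q α β x)
              + (L₂ + L₃) / 2 * (∫ x : Fin 3 → ℝ, qd Q α β x * qT Q β α x)
              - ((L₂ + L₃) / 2 * (2 / 3) * (if α = β then (1 : ℝ) else 0))
                  * (∫ x : Fin 3 → ℝ, qd Q α β x * qtr Q x)
              + ∫ x : Fin 3 → ℝ, qd Q α β x * EQ L₄ Q α β x) :=
          Finset.sum_congr rfl fun α _ => Finset.sum_congr rfl fun β _ => hWsplit α β
      _ = _ := by simp only [Finset.sum_add_distrib, Finset.sum_sub_distrib, ← Finset.mul_sum]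
  have hT2eq : (∑ α : Fin 3, ∑ β : Fin 3, ∫ x : Fin 3 → ℝ, qd Q α β x * qT Q β α x)
      = ∑ α : Fin 3, ∑ β : Fin 3, ∫ x : Fin 3 → ℝ, qd Q α β x * qT Q α β x := by
    rw [Finset.sum_comm]
    exact Finset.sum_congr rfl fun α _ => Finset.sum_congr rfl fun β _ => by
      rw [hqdsym α β]
  have hδ0 : (∑ α : Fin 3, ∑ β : Fin 3,
      ((L₂ + L₃) / 2 * (2 / 3) * (if α = β then (1 : ℝ) else 0))
        * (∫ x : Fin 3 → ℝ, qd Q α β x * qtr Q x)) = 0 := by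
    have hinner : ∀ α : Fin 3, (∑ β : Fin 3,
        ((L₂ + L₃) / 2 * (2 / 3) * (if α = β then (1 : ℝ) else 0))
          * (∫ x : Fin 3 → ℝ, qd Q α β x * qtr Q x))
        = (L₂ + L₃) / 2 * (2 / 3) * ∫ x : Fin 3 → ℝ, qd Q α α x * qtr Q x := by
      intro α
      rw [Finset.sum_eq_single α]
      · simp
      · intro b _ hb
        simp [Ne.symm hb]
      · intro h; exact absurd (Finset.mem_univ α) h
    rw [show (∑ α : Fin 3, ∑ β : Fin 3,
        ((L₂ + L₃) / 2 * (2 / 3) * (if α = β then (1 : ℝ) else 0))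
          * (∫ x : Fin 3 → ℝ, qd Q α β x * qtr Q x))
        = ∑ α : Fin 3, (L₂ + L₃) / 2 * (2 / 3) * ∫ x : Fin 3 → ℝ, qd Q α α x * qtr Q x from
      Finset.sum_congr rfl fun α _ => hinner α, ← Finset.mul_sum]
    have hz0 : (∑ α : Fin 3, ∫ x : Fin 3 → ℝ, qd Q α α x * qtr Q x) = 0 := by
      rw [← integral_finset_sum _ (fun α _ => (hqdSm α α).integrable_mul hqtrSm)]
      have hz : (fun x : Fin 3 → ℝ => ∑ α : Fin 3, qd Q α α x * qtr Q x)
          = fun _ => (0 : ℝ) := by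
        funext x; rw [← Finset.sum_mul, hdiag0, zero_mul]
      rw [hz, integral_zero]
    rw [hz0, mul_zero]
  have hT1eq : (∑ α : Fin 3, ∑ β : Fin 3, ∫ x : Fin 3 → ℝ, qd Q α β x * qT Q α β x)
      = SD := by
    have hstep : ∀ α β : Fin 3, (∫ x : Fin 3 → ℝ, qd Q α β x * qT Q α β x)
        = ∑ m : Fin 3, ∑ k : Fin 3, ∫ x : Fin 3 → ℝ,
            pd m (pd β (fun y => Q y α β)) x * pd m (pd k (fun y => Q y α k)) x := by
      intro α β
      have h1 : (fun x => qd Q α β x * qT Q α β x)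
          = fun x => ∑ m : Fin 3, ∑ k : Fin 3,
              pd m (pd m (fun y => Q y α β)) x * pd k (pd β (fun y => Q y α k)) x := by
        funext x; simp only [qd, qT]; rw [Finset.sum_mul_sum]
      rw [show (∫ x : Fin 3 → ℝ, qd Q α β x * qT Q α β x)
          = ∫ x : Fin 3 → ℝ, ∑ m : Fin 3, ∑ k : Fin 3,
              pd m (pd m (fun y => Q y α β)) x * pd k (pd β (fun y => Q y α k)) x from
        by rw [h1]]
      rw [int2 fun m k =>
        (((hq α β).pd' m).pd' m).integrable_mul (((hq α k).pd' β).pd' k)]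
      exact Finset.sum_congr rfl fun m _ => Finset.sum_congr rfl fun k _ =>
        cross_id (hq α β) (hq α k) m k β
    calc (∑ α : Fin 3, ∑ β : Fin 3, ∫ x : Fin 3 → ℝ, qd Q α β x * qT Q α β x)
        = ∑ α : Fin 3, ∑ β : Fin 3, ∑ m : Fin 3, ∑ k : Fin 3, ∫ x : Fin 3 → ℝ,
            pd m (pd β (fun y => Q y α β)) x * pd m (pd k (fun y => Q y α k)) x :=
          Finset.sum_congr rfl fun α _ => Finset.sum_congr rfl fun β _ => hstep α β
      _ = ∑ α : Fin 3, ∑ m : Fin 3, ∑ β : Fin 3, ∑ k : Fin 3, ∫ x : Fin 3 → ℝ,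
            pd m (pd β (fun y => Q y α β)) x * pd m (pd k (fun y => Q y α k)) x :=
          Finset.sum_congr rfl fun α _ => Finset.sum_comm
      _ = SD := by
          rw [hSDdef]
          refine Finset.sum_congr rfl fun α _ => Finset.sum_congr rfl fun m _ => ?_
          have h2 : (fun x : Fin 3 → ℝ => (∑ β : Fin 3, pd m (pd β (fun z => Q z α β)) x) ^ 2)
              = fun x => ∑ β : Fin 3, ∑ k : Fin 3,
                  pd m (pd β (fun y => Q y α β)) x * pd m (pd k (fun y => Q y α k)) x := by
            funext x; rw [pow_two, Finset.sum_mul_sum]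
          rw [show (∫ x : Fin 3 → ℝ, (∑ β : Fin 3, pd m (pd β (fun z => Q z α β)) x) ^ 2)
              = ∑ β : Fin 3, ∑ k : Fin 3, ∫ x : Fin 3 → ℝ,
                  pd m (pd β (fun y => Q y α β)) x * pd m (pd k (fun y => Q y α k)) x from by
            rw [show (fun x : Fin 3 → ℝ =>
                (∑ β : Fin 3, pd m (pd β (fun z => Q z α β)) x) ^ 2)
                = fun x => ∑ β : Fin 3, ∑ k : Fin 3,
                    pd m (pd β (fun y => Q y α β)) x * pd m (pd k (fun y => Q y α k)) x from h2]
            exact int2 fun β k =>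
              (((hq α β).pd' β).pd' m).integrable_mul (((hq α k).pd' k).pd' m)]
  -- pointwise bound on the chiral term
  have hqg0 : ∀ x, 0 ≤ qg Q x := fun x =>
    Finset.sum_nonneg fun α _ => Finset.sum_nonneg fun β _ =>
      Finset.sum_nonneg fun k _ => sq_nonneg _
  have habc : ∀ a b c g t : ℝ, a ^ 2 ≤ 9 * g → b ^ 2 ≤ 9 * g → c ^ 2 ≤ 27 * g →
      0 ≤ g → (t = 0 ∨ t = 1) → (a + b - 2 / 3 * t * c) ^ 2 ≤ 92 * g := by
    intro a b c g t ha hb hc hg ht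
    rcases ht with h | h <;> subst h
    · nlinarith [ha, hb, hg, sq_nonneg (a - b)]
    · nlinarith [ha, hb, hc, hg, sq_nonneg (a - b), sq_nonneg (a + 2 / 3 * c),
        sq_nonneg (b + 2 / 3 * c)]
  have hEbd : ∀ α β x, (EQ L₄ Q α β x) ^ 2 ≤ 23 * L₄ ^ 2 * qg Q x := by
    intro α β x
    have key2 : ∀ a b : Fin 3,
        (∑ l : Fin 3, ∑ k : Fin 3, eps l a k * pd k (fun y => Q y l b) x) ^ 2
          ≤ 9 * qg Q x := by
      intro a b
      have h1 : (∑ l : Fin 3, ∑ k : Fin 3, eps l a k * pd k (fun y => Q y l b) x)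
          = ∑ p ∈ Finset.univ ×ˢ (Finset.univ : Finset (Fin 3)),
              eps p.1 a p.2 * pd p.2 (fun y => Q y p.1 b) x := by
        rw [Finset.sum_product]
      rw [h1]
      calc (∑ p ∈ Finset.univ ×ˢ (Finset.univ : Finset (Fin 3)),
            eps p.1 a p.2 * pd p.2 (fun y => Q y p.1 b) x) ^ 2
          ≤ (#(Finset.univ ×ˢ (Finset.univ : Finset (Fin 3))) : ℝ)
              * ∑ p ∈ Finset.univ ×ˢ (Finset.univ : Finset (Fin 3)),
                (eps p.1 a p.2 * pd p.2 (fun y => Q y p.1 b) x) ^ 2 :=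
            sq_sum_le_card_mul_sum_sq
        _ = 9 * ∑ p ∈ Finset.univ ×ˢ (Finset.univ : Finset (Fin 3)),
                (eps p.1 a p.2 * pd p.2 (fun y => Q y p.1 b) x) ^ 2 := by
            norm_num
        _ ≤ 9 * ∑ p ∈ Finset.univ ×ˢ (Finset.univ : Finset (Fin 3)),
                (pd p.2 (fun y => Q y p.1 b) x) ^ 2 := by
            refine mul_le_mul_of_nonneg_left (Finset.sum_le_sum fun p _ => ?_) (by norm_num)
            rw [mul_pow]
            nlinarith [eps_sq_le_one p.1 a p.2, sq_nonneg (pd p.2 (fun y => Q y p.1 b) x)]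
        _ = 9 * ∑ l : Fin 3, ∑ k : Fin 3, (pd k (fun y => Q y l b) x) ^ 2 := by
            rw [Finset.sum_product]
        _ ≤ 9 * qg Q x := by
            refine mul_le_mul_of_nonneg_left (Finset.sum_le_sum fun l _ => ?_) (by norm_num)
            exact Finset.single_le_sum
              (f := fun c => ∑ k : Fin 3, (pd k (fun y => Q y l c) x) ^ 2)
              (fun c _ => Finset.sum_nonneg fun k _ => sq_nonneg _) (Finset.mem_univ b)
    have key3 : (∑ l : Fin 3, ∑ p : Fin 3, ∑ k : Fin 3,
        eps l p k * pd k (fun y => Q y l p) x) ^ 2 ≤ 27 * qg Q x := by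
      have h1 : (∑ l : Fin 3, ∑ p : Fin 3, ∑ k : Fin 3,
          eps l p k * pd k (fun y => Q y l p) x)
          = ∑ q ∈ (Finset.univ ×ˢ Finset.univ) ×ˢ (Finset.univ : Finset (Fin 3)),
              eps q.1.1 q.1.2 q.2 * pd q.2 (fun y => Q y q.1.1 q.1.2) x := by
        rw [Finset.sum_product, Finset.sum_product]
      rw [h1]
      calc (∑ q ∈ (Finset.univ ×ˢ Finset.univ) ×ˢ (Finset.univ : Finset (Fin 3)),
            eps q.1.1 q.1.2 q.2 * pd q.2 (fun y => Q y q.1.1 q.1.2) x) ^ 2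
          ≤ (#((Finset.univ ×ˢ Finset.univ) ×ˢ (Finset.univ : Finset (Fin 3))) : ℝ)
              * ∑ q ∈ (Finset.univ ×ˢ Finset.univ) ×ˢ (Finset.univ : Finset (Fin 3)),
                (eps q.1.1 q.1.2 q.2 * pd q.2 (fun y => Q y q.1.1 q.1.2) x) ^ 2 :=
            sq_sum_le_card_mul_sum_sq
        _ = 27 * ∑ q ∈ (Finset.univ ×ˢ Finset.univ) ×ˢ (Finset.univ : Finset (Fin 3)),
                (eps q.1.1 q.1.2 q.2 * pd q.2 (fun y => Q y q.1.1 q.1.2) x) ^ 2 := by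
            norm_num
        _ ≤ 27 * ∑ q ∈ (Finset.univ ×ˢ Finset.univ) ×ˢ (Finset.univ : Finset (Fin 3)),
                (pd q.2 (fun y => Q y q.1.1 q.1.2) x) ^ 2 := by
            refine mul_le_mul_of_nonneg_left (Finset.sum_le_sum fun q _ => ?_) (by norm_num)
            rw [mul_pow]
            nlinarith [eps_sq_le_one q.1.1 q.1.2 q.2,
              sq_nonneg (pd q.2 (fun y => Q y q.1.1 q.1.2) x)]
        _ = 27 * qg Q x := by
            rw [Finset.sum_product, Finset.sum_product]
            rfl
    have ht : ((if α = β then (1 : ℝ) else 0) = 0 ∨ (if α = β then (1 : ℝ) else 0) = 1) := by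
      split_ifs <;> simp
    have hX := habc _ _ _ _ _ (key2 α β) (key2 β α) key3 (hqg0 x) ht
    have hX2 := mul_le_mul_of_nonneg_left hX (show (0 : ℝ) ≤ L₄ ^ 2 / 4 by positivity)
    simp only [EQ]
    nlinarith [hX2]
  -- cross-term lower bound
  have hcross : ∀ α β, -(L₁ ^ 2 / 2) * (∫ x : Fin 3 → ℝ, (qd Q α β x) ^ 2)
      - 2 * (∫ x : Fin 3 → ℝ, (EQ L₄ Q α β x) ^ 2)
      ≤ 2 * L₁ * ∫ x : Fin 3 → ℝ, qd Q α β x * EQ L₄ Q α β x := by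
    intro α β
    have hmono : (∫ x : Fin 3 → ℝ,
        (-(L₁ ^ 2 / 2) * (qd Q α β x) ^ 2 - 2 * (EQ L₄ Q α β x) ^ 2))
        ≤ ∫ x : Fin 3 → ℝ, 2 * L₁ * (qd Q α β x * EQ L₄ Q α β x) := by
      refine integral_mono ?_ ?_ ?_
      · exact ((hqdSm α β).integrable_sq.const_mul _).sub
          ((hqESm α β).integrable_sq.const_mul _)
      · exact (((hqdSm α β).mul (hqESm α β)).const_mul _).integrable
      · intro x
        nlinarith [sq_nonneg (L₁ * qd Q α β x + 2 * EQ L₄ Q α β x)]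
    rwa [integral_sub ((hqdSm α β).integrable_sq.const_mul _)
        ((hqESm α β).integrable_sq.const_mul _),
      integral_const_mul, integral_const_mul, integral_const_mul] at hmono
  have hcrossSum : -(L₁ ^ 2 / 2) * SA - 2 * E2 ≤ 2 * L₁ * SE := by
    have hsum := Finset.sum_le_sum (s := (Finset.univ : Finset (Fin 3)))
      (fun α (_ : α ∈ Finset.univ) => Finset.sum_le_sum
        (fun β (_ : β ∈ Finset.univ) => hcross α β))
    have e1 : (∑ α : Fin 3, ∑ β : Fin 3,
        (-(L₁ ^ 2 / 2) * (∫ x : Fin 3 → ℝ, (qd Q α β x) ^ 2)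
          - 2 * (∫ x : Fin 3 → ℝ, (EQ L₄ Q α β x) ^ 2)))
        = -(L₁ ^ 2 / 2) * SA - 2 * E2 := by
      rw [hSAdef, hE2def]
      simp only [Finset.sum_sub_distrib, ← Finset.mul_sum]
    have e2 : (∑ α : Fin 3, ∑ β : Fin 3,
        2 * L₁ * ∫ x : Fin 3 → ℝ, qd Q α β x * EQ L₄ Q α β x) = 2 * L₁ * SE := by
      rw [hSEdef]
      simp only [← Finset.mul_sum]
    rw [e1, e2] at hsum
    exact hsum
  have hE2bd : E2 ≤ 9 * (23 * L₄ ^ 2 * IG) := by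
    have hone : ∀ α β : Fin 3, (∫ x : Fin 3 → ℝ, (EQ L₄ Q α β x) ^ 2)
        ≤ 23 * L₄ ^ 2 * IG := by
      intro α β
      have h := integral_mono ((hqESm α β).integrable_sq)
        ((hqgSm.const_mul (23 * L₄ ^ 2)).integrable) (fun x => hEbd α β x)
      rwa [integral_const_mul, ← hIGdef] at h
    calc E2 ≤ ∑ α : Fin 3, ∑ β : Fin 3, 23 * L₄ ^ 2 * IG := by
          rw [hE2def]
          exact Finset.sum_le_sum fun α _ => Finset.sum_le_sum fun β _ => hone α β
      _ = 9 * (23 * L₄ ^ 2 * IG) := by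
          simp [Finset.sum_const, Finset.card_univ]
          ring
  have hSW2nn : 0 ≤ SW2 := by
    rw [hSW2def]
    exact Finset.sum_nonneg fun α _ => Finset.sum_nonneg fun β _ =>
      integral_nonneg fun x => sq_nonneg _
  -- final assembly
  rw [hIAeq, hIDeq, hIGeq, hRHS]
  have hSDWval : SDW = (L₂ + L₃) / 2 * SD + (L₂ + L₃) / 2 * SD - 0 + SE := by
    rw [hSDWeq, hT2eq, hT1eq, hδ0]
  rw [hSDWval]
  linarith [hcrossSum, hE2bd, hSW2nn]
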